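/- arXiv:0704.0874 — 3 statements merged into one kernel-verified Lean document; each statement's English description precedes it below -/
import Mathlib

section
/- Let n ≥ 3 be an integer, set m := ⌊(n+1)/2⌋, and let a be an integer. Let o : ℕ → ℤ and R : ℕ → ℤ be nondecreasing sequences such that for every index i, if o(i+1) = o(i) and R(i+1) = R(i), then n divides a + 2i − o(i). Then for every index i and every integer w with 0 ≤ w ≤ m, one has (o(i+w) + R(i+w)) − (o(i) + R(i)) ≥ w − 1. -/
/-!
Put `c k := o k + R k - k`. A non-flat step raises `o` or `R`, so `c` does not decrease there,
and at a flat step `c` drops by exactly one. Two flat indices `l < j` of a window of length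
`w ≤ m` satisfy `2 (j - l) < n`, so the divisibility hypothesis forces `o j - o l ≥ 2 (j - l)`,
i.e. `c l < c j`. So `c j ≥ c i` at every flat index `j` of the window, and `c` ends the
window at least at `c i - 1`.
-/

theorem Int.nonneg_of_dvd_of_neg_lt {n x : ℤ} (h : n ∣ x) (hx : -n < x) : 0 ≤ x := by
  obtain ⟨k, rfl⟩ := h
  rcases lt_trichotomy n 0 with hn | rfl | hn
  · nlinarith
  · simp
  · have : -1 < k := by nlinarith
    exact mul_nonneg hn.le (by omega)

theorem two_mul_sub_le_sub_of_dvd {n a l j ol oj : ℤ} (hl : n ∣ a + 2 * l - ol)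
    (hj : n ∣ a + 2 * j - oj) (hmono : ol ≤ oj) (hclose : 2 * (j - l) < n) :
    2 * (j - l) ≤ oj - ol := by
  have hdiff : n ∣ (oj - ol) - 2 * (j - l) := by
    rw [show (oj - ol) - 2 * (j - l) = (a + 2 * l - ol) - (a + 2 * j - oj) by ring]
    exact dvd_sub hl hj
  have := Int.nonneg_of_dvd_of_neg_lt hdiff (by linarith)
  linarith

theorem le_add_one_of_unit_drops_separated (c : ℕ → ℤ) (P : ℕ → Prop) (i w : ℕ)
    (hstep : ∀ k, i ≤ k → k < i + w → ¬ P k → c k ≤ c (k + 1))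
    (hdrop : ∀ k, i ≤ k → k < i + w → P k → c k ≤ c (k + 1) + 1)
    (hpair : ∀ l k, i ≤ l → l < k → k < i + w → P l → P k → c l < c k) :
    c i ≤ c (i + w) + 1 := by
  -- Once a marked index `l` with `c i ≤ c l` exists, every later marked index lies above it.
  suffices h : ∀ v ≤ w, c i ≤ c (i + v) + 1 ∧
      (c i ≤ c (i + v) ∨ ∃ l, i ≤ l ∧ l < i + v ∧ P l ∧ c i ≤ c l) from (h w le_rfl).1
  intro v hv
  induction v with
  | zero => simp
  | succ v ih =>
    obtain ⟨hlow, hmark⟩ := ih (by omega)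
    rw [← add_assoc]
    by_cases hP : P (i + v)
    · have hcur : c i ≤ c (i + v) := by
        rcases hmark with h | ⟨l, hil, hlv, hl, hcl⟩
        · exact h
        · exact hcl.trans (hpair l (i + v) hil hlv (by omega) hl hP).le
      have := hdrop (i + v) (by omega) (by omega) hP
      exact ⟨by omega, Or.inr ⟨i + v, by omega, by omega, hP, hcur⟩⟩
    · have := hstep (i + v) (by omega) (by omega) hP
      refine ⟨by omega, ?_⟩
      rcases hmark with h | ⟨l, hil, hlv, hl, hcl⟩
      · exact Or.inl (by omega)
      · exact Or.inr ⟨l, hil, by omega, hl, hcl⟩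

theorem window_inequality_general (n a m : ℤ) (hm : m = (n + 1) / 2)
    (o R : ℕ → ℤ) (ho : Monotone o) (hR : Monotone R)
    (hdiv : ∀ i : ℕ, o (i + 1) = o i → R (i + 1) = R i → n ∣ a + 2 * (i : ℤ) - o i) :
    ∀ (i w : ℕ), (w : ℤ) ≤ m →
      (o (i + w) + R (i + w)) - (o i + R i) ≥ (w : ℤ) - 1 := by
  intro i w hw
  have key := le_add_one_of_unit_drops_separated (fun k => o k + R k - k)
    (fun k => o (k + 1) = o k ∧ R (k + 1) = R k) i w
    (fun k _ _ hflat => by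
      have := ho (Nat.le_add_right k 1); have := hR (Nat.le_add_right k 1)
      push_cast; omega)
    (fun k _ _ ⟨hok, hRk⟩ => by omega)
    (fun l k _ hlk hkw ⟨hol, hRl⟩ ⟨hok, hRk⟩ => by
      have := two_mul_sub_le_sub_of_dvd (hdiv l hol hRl) (hdiv k hok hRk) (ho hlk.le)
        (by omega)
      have := hR hlk.le
      omega)
  push_cast at key
  omega

/-- Let `n ≥ 3`, `m := ⌊(n+1)/2⌋`, and `a` an integer. Let `o, R : ℕ → ℤ` be
nondecreasing sequences such that whenever `o(i+1) = o(i)` and `R(i+1) = R(i)`,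
one has `n ∣ a + 2i - o(i)`. Then for every index `i` and every `0 ≤ w ≤ m`,
`(o(i+w) + R(i+w)) - (o(i) + R(i)) ≥ w - 1`. -/
theorem window_inequality (n a m : ℤ) (hn : 3 ≤ n) (hm : m = (n + 1) / 2)
    (o R : ℕ → ℤ) (ho : Monotone o) (hR : Monotone R)
    (hdiv : ∀ i : ℕ, o (i + 1) = o i → R (i + 1) = R i → n ∣ a + 2 * (i : ℤ) - o i) :
    ∀ (i w : ℕ), (w : ℤ) ≤ m →
      (o (i + w) + R (i + w)) - (o i + R i) ≥ (w : ℤ) - 1 :=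
  window_inequality_general n a m hm o R ho hR hdiv
end

section
/- Let n ≥ 3 be an integer, set m := ⌊(n+1)/2⌋, and let a be an integer. Let o : ℕ → ℤ and R : ℕ → ℤ be nondecreasing sequences with o(0) ≥ 0 and R(0) = 0, such that for every index i, if o(i+1) = o(i) and R(i+1) = R(i), then n divides a + 2i − o(i). Then for all integers b ≥ 0 and all indices i with i ≥ b·m, one has o(i) + R(i) ≥ b(m−1). -/
/-!
Call `i` a stall when both `o` and `R` are constant from `i` to `i + 1`; away from stalls
`o + R` grows by at least one per step. Two stalls `j < k` less than `n / 2` apart force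
`o k - o j ≡ 2 (k - j) [ZMOD n]` with `0 < 2 (k - j) < n`, hence `o k - o j ≥ 2 (k - j)`:
the second stall is paid for twice over. So `o + R` gains at least `m - 1` on every window
of length `m`, and iterating over `b` consecutive windows from `0` gives the bound.
-/

theorem Int.le_of_dvd_sub_of_lt {n x y : ℤ} (hx : x < n) (hy : 0 ≤ y) (h : n ∣ x - y) :
    x ≤ y := by
  obtain ⟨t, ht⟩ := h
  by_contra! hyx
  have ht_pos : 1 ≤ t := by
    by_contra! ht
    nlinarith
  nlinarith

section Stalls

variable (o R : ℕ → ℤ)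

def IsStall (i : ℕ) : Prop :=
  o (i + 1) = o i ∧ R (i + 1) = R i

variable {o R}

theorem add_one_le_of_not_isStall (ho : Monotone o) (hR : Monotone R) {i : ℕ}
    (hi : ¬IsStall o R i) : o i + R i + 1 ≤ o (i + 1) + R (i + 1) := by
  have := ho (Nat.le_add_right i 1)
  have := hR (Nat.le_add_right i 1)
  unfold IsStall at hi
  omega

theorem add_le_of_forall_not_isStall (ho : Monotone o) (hR : Monotone R) (i : ℕ) :
    ∀ d : ℕ, (∀ e < d, ¬IsStall o R (i + e)) → o i + R i + d ≤ o (i + d) + R (i + d)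
  | 0, _ => by simp
  | d + 1, h => by
    have ih := add_le_of_forall_not_isStall ho hR i d fun e he => h e (by omega)
    have := add_one_le_of_not_isStall ho hR (h d d.lt_succ_self)
    push_cast
    rw [← add_assoc i d 1]
    linarith

theorem add_two_mul_le_of_isStall {n a : ℤ} (ho : Monotone o)
    (hdiv : ∀ i, IsStall o R i → n ∣ a + 2 * (i : ℤ) - o i) {j k : ℕ} (hjk : j ≤ k)
    (hj : IsStall o R j) (hk : IsStall o R k) (hn : 2 * ((k : ℤ) - j) < n) :
    o j + 2 * ((k : ℤ) - j) ≤ o k := by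
  have hdvd : n ∣ 2 * ((k : ℤ) - j) - (o k - o j) := by
    have hdiff := dvd_sub (hdiv k hk) (hdiv j hj)
    rwa [show a + 2 * (k : ℤ) - o k - (a + 2 * j - o j) = 2 * ((k : ℤ) - j) - (o k - o j) by
      ring] at hdiff
  linarith [Int.le_of_dvd_sub_of_lt hn (sub_nonneg.mpr (ho hjk)) hdvd]

theorem add_sub_one_le_of_two_mul_le {n a : ℤ} (ho : Monotone o) (hR : Monotone R)
    (hdiv : ∀ i, IsStall o R i → n ∣ a + 2 * (i : ℤ) - o i) (i d : ℕ)
    (hd : 2 * (d : ℤ) ≤ n + 1) : o i + R i + d - 1 ≤ o (i + d) + R (i + d) := by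
  induction d using Nat.strong_induction_on with
  | _ d ih =>
  rcases d with _ | d
  · simp
  rw [← add_assoc i d 1]
  by_cases hstall : IsStall o R (i + d)
  · have hstep : o (i + d) + R (i + d) = o (i + d + 1) + R (i + d + 1) := by
      rw [hstall.1, hstall.2]
    by_cases hfree : ∀ e < d, ¬IsStall o R (i + e)
    · have := add_le_of_forall_not_isStall ho hR i d hfree
      push_cast
      linarith
    push Not at hfree
    obtain ⟨e, hed, he⟩ := hfree
    have hprev := ih e (by omega) (by omega)
    have hgap := add_two_mul_le_of_isStall ho hdiv (by omega : i + e ≤ i + d) he hstall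
      (by push_cast; omega)
    have := hR (by omega : i + e ≤ i + d)
    push_cast at hgap ⊢
    linarith
  · have := ih d d.lt_succ_self (by omega)
    have := add_one_le_of_not_isStall ho hR hstall
    push_cast
    linarith

theorem mul_sub_one_le_of_two_mul_le {n a : ℤ} (ho : Monotone o) (hR : Monotone R)
    (hdiv : ∀ i, IsStall o R i → n ∣ a + 2 * (i : ℤ) - o i) {w : ℕ}
    (hw : 2 * (w : ℤ) ≤ n + 1) (b : ℕ) :
    o 0 + R 0 + b * ((w : ℤ) - 1) ≤ o (b * w) + R (b * w) := by
  induction b with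
  | zero => simp
  | succ b ih =>
    have := add_sub_one_le_of_two_mul_le ho hR hdiv (b * w) w hw
    rw [Nat.succ_mul]
    push_cast
    linarith

end Stalls

/-- Abstract form of Lemma 1 ('inec'): let `n ≥ 3`, `m := ⌊(n+1)/2⌋`, `a ∈ ℤ`.
Let `o, R : ℕ → ℤ` be nondecreasing with `o(0) ≥ 0`, `R(0) = 0`, such that
whenever `o(i+1) = o(i)` and `R(i+1) = R(i)` one has `n ∣ a + 2i - o(i)`.
Then for all `b ≥ 0` and all `i ≥ b·m`, `o(i) + R(i) ≥ b(m-1)`. -/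
theorem lemma_inec_abstract (n a m : ℤ) (hn : 3 ≤ n) (hm : m = (n + 1) / 2)
    (o R : ℕ → ℤ) (ho : Monotone o) (hR : Monotone R)
    (ho0 : 0 ≤ o 0) (hR0 : R 0 = 0)
    (hdiv : ∀ i : ℕ, o (i + 1) = o i → R (i + 1) = R i → n ∣ a + 2 * (i : ℤ) - o i) :
    ∀ (b i : ℕ), (b : ℤ) * m ≤ (i : ℤ) →
      o i + R i ≥ (b : ℤ) * (m - 1) := by
  intro b i hbi
  lift m to ℕ using (by omega)
  have hwindow := mul_sub_one_le_of_two_mul_le ho hR (fun i h => hdiv i h.1 h.2)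
    (by omega : 2 * (m : ℤ) ≤ n + 1) b
  have hbi' : b * m ≤ i := by exact_mod_cast hbi
  linarith [ho hbi', hR hbi']
end

section
/- Let g, r, d, e, f be integers with 0 ≤ f < e ≤ g, r − e + f ≥ 0, f·(r+1−e+f) ≥ e, g − d + r ≥ 0, ρ(g, r, d) − f(r+1−e+f) + e ≥ 0 and ρ(g, r−e+f, d−e) ≥ 0. Set s := r+1−e+f, t := e−f, c := e mod s, c̃ := e mod t, α₀ := ⌊e/s⌋ + d − r − f − e and β₀ := ⌊e/t⌋. Define the sequence γ_0, …, γ_r of r+1 integers by: γ_j := e − β₀ − 1 for 0 ≤ j ≤ c̃−1; γ_j := e − β₀ for c̃ ≤ j ≤ t−1; γ_j := d − r − α₀ − 1 for t ≤ j ≤ t+c−1; and γ_j := d − r − α₀ for t+c ≤ j ≤ r. Then Σ_{j=0}^{r} max{γ_j + (g−e) − d + r, 0} ≤ g − e. -/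
/-- The Brill–Noether number `ρ(g, r, d) = g - (r+1)(g-d+r)`. -/
def rho (g r d : ℤ) : ℤ := g - (r + 1) * (g - d + r)

/-!
Put `h := g - d + r`. Shifted by `g - e - d + r`, the first `t` entries of `γ` are `h` minus the
balanced partition of `e` into `t` parts (`e % t` parts `e / t + 1`, the rest `e / t`), and the
last `s` entries are `h + f` minus the balanced partition of `e` into `s` parts. The parts `bᵢ` of
a balanced partition of `m` into `n` parts differ by at most one, so for any `x` the terms `x - bᵢ`
are all `≤ 0` or all `≥ 0`, and truncating them at `0` sums to `max (n * x - m) 0`. The second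
block is nonnegative because `e ≤ f * s`, so the sum is `max (t * h - e) 0 + s * (h + f) - e`, and
the two branches of the max are bounded by `g - e` exactly by `ρ(g, r - e + f, d - e) ≥ 0` and
`ρ(g, r, d) - f * s + e ≥ 0`.
-/

open Finset

theorem sum_Ico_consecutive' {α M : Type*} [LinearOrder α] [LocallyFiniteOrder α]
    [AddCommMonoid M] (F : α → M) {a b c : α} (hab : a ≤ b) (hbc : b ≤ c) :
    ∑ i ∈ Ico a b, F i + ∑ i ∈ Ico b c, F i = ∑ i ∈ Ico a c, F i := by
  rw [← sum_union (Ico_disjoint_Ico_consecutive a b c), Ico_union_Ico_eq_Ico hab hbc]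

namespace Int

theorem sum_Ico_eq_mul_of_forall_eq {F : ℤ → ℤ} {a b v : ℤ} (hab : a ≤ b)
    (hF : ∀ i, a ≤ i → i < b → F i = v) :
    ∑ i ∈ Ico a b, F i = (b - a) * v := by
  rw [sum_congr rfl fun i hi => hF i (mem_Ico.1 hi).1 (mem_Ico.1 hi).2, sum_const, card_Ico,
    nsmul_eq_mul, toNat_of_nonneg (sub_nonneg.2 hab)]

theorem sum_Ico_max_sub_balanced_partition {F : ℤ → ℤ} {a n m x : ℤ} (hn : 0 < n)
    (hlarge : ∀ i, a ≤ i → i < a + m % n → F i = x - m / n - 1)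
    (hsmall : ∀ i, a + m % n ≤ i → i < a + n → F i = x - m / n) :
    ∑ i ∈ Ico a (a + n), max (F i) 0 = max (n * x - m) 0 := by
  have hrem_nonneg : 0 ≤ m % n := emod_nonneg m hn.ne'
  have hrem_lt : m % n < n := emod_lt_of_pos m hn
  have hdiv : n * (m / n) + m % n = m := mul_ediv_add_emod m n
  rw [← sum_Ico_consecutive' _ (le_add_of_nonneg_right hrem_nonneg) (by omega),
    sum_Ico_eq_mul_of_forall_eq (by omega) fun i h₁ h₂ => by rw [hlarge i h₁ h₂],
    sum_Ico_eq_mul_of_forall_eq (by omega) fun i h₁ h₂ => by rw [hsmall i h₁ h₂]]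
  rcases le_or_gt x (m / n) with hx | hx
  · rw [max_eq_right (by omega), max_eq_right (by omega), max_eq_right (by nlinarith)]
    ring
  · rw [max_eq_left (by omega), max_eq_left (by omega), max_eq_left (by nlinarith)]
    linear_combination -hdiv

end Int

theorem eisenbud_harris_condition_gamma_general (g r d e f s t c c' α₀ β₀ : ℤ)
    (hfe : f < e) (href : 0 ≤ r - e + f)
    (hfs : f * (r + 1 - e + f) ≥ e) (hgdr : 0 ≤ g - d + r)
    (hrho1 : rho g r d - f * (r + 1 - e + f) + e ≥ 0)
    (hrho2 : rho g (r - e + f) (d - e) ≥ 0)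
    (hs : s = r + 1 - e + f) (ht : t = e - f)
    (hc : c = e % s) (hc' : c' = e % t)
    (hα₀ : α₀ = e / s + d - r - f - e) (hβ₀ : β₀ = e / t)
    (γ : ℤ → ℤ)
    (hγ1 : ∀ j, 0 ≤ j → j ≤ c' - 1 → γ j = e - β₀ - 1)
    (hγ2 : ∀ j, c' ≤ j → j ≤ t - 1 → γ j = e - β₀)
    (hγ3 : ∀ j, t ≤ j → j ≤ t + c - 1 → γ j = d - r - α₀ - 1)
    (hγ4 : ∀ j, t + c ≤ j → j ≤ r → γ j = d - r - α₀) :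
    ∑ j ∈ Finset.Icc (0 : ℤ) r, max (γ j + (g - e) - d + r) 0 ≤ g - e := by
  subst hc hc' hα₀ hβ₀
  have hblocks : Icc 0 r = Ico 0 (0 + t + s) := by ext; simp only [mem_Icc, mem_Ico]; omega
  rw [hblocks, ← sum_Ico_consecutive' _ (b := 0 + t) (by omega) (by omega),
    Int.sum_Ico_max_sub_balanced_partition (m := e) (x := g - d + r) (by omega)
      (fun j h₁ h₂ => by rw [hγ1 j h₁ (by omega)]; ring)
      (fun j h₁ h₂ => by rw [hγ2 j (by omega) (by omega)]; ring),
    Int.sum_Ico_max_sub_balanced_partition (m := e) (x := g - d + r + f) (by omega)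
      (fun j h₁ h₂ => by rw [hγ3 j (by omega) (by omega)]; ring)
      (fun j h₁ h₂ => by rw [hγ4 j (by omega) (by omega)]; ring)]
  have hα_block_nonneg : 0 ≤ s * (g - d + r + f) - e := by
    rw [← hs] at hfs
    nlinarith [mul_nonneg (by omega : (0 : ℤ) ≤ s) hgdr]
  rw [max_eq_left hα_block_nonneg, ← max_add_add_right]
  unfold rho at hrho1 hrho2
  subst hs ht
  apply max_le <;> linarith

/-- Verification of inequality (3.6) in the proof of Theorem 0.5: under the
stated numerical hypotheses, the ramification sequence `γ` built from the
balanced Schubert indices `ᾱ` and `β̄` satisfies the Eisenbud–Harris criterion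
`Σ_{j=0}^{r} max{γ_j + (g-e) - d + r, 0} ≤ g - e`. -/
theorem eisenbud_harris_condition_gamma (g r d e f s t c c' α₀ β₀ : ℤ)
    (hf : 0 ≤ f) (hfe : f < e) (heg : e ≤ g) (href : 0 ≤ r - e + f)
    (hfs : f * (r + 1 - e + f) ≥ e) (hgdr : 0 ≤ g - d + r)
    (hrho1 : rho g r d - f * (r + 1 - e + f) + e ≥ 0)
    (hrho2 : rho g (r - e + f) (d - e) ≥ 0)
    (hs : s = r + 1 - e + f) (ht : t = e - f)
    (hc : c = e % s) (hc' : c' = e % t)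
    (hα₀ : α₀ = e / s + d - r - f - e) (hβ₀ : β₀ = e / t)
    (γ : ℤ → ℤ)
    (hγ1 : ∀ j, 0 ≤ j → j ≤ c' - 1 → γ j = e - β₀ - 1)
    (hγ2 : ∀ j, c' ≤ j → j ≤ t - 1 → γ j = e - β₀)
    (hγ3 : ∀ j, t ≤ j → j ≤ t + c - 1 → γ j = d - r - α₀ - 1)
    (hγ4 : ∀ j, t + c ≤ j → j ≤ r → γ j = d - r - α₀) :
    ∑ j ∈ Finset.Icc (0 : ℤ) r, max (γ j + (g - e) - d + r) 0 ≤ g - e :=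
  eisenbud_harris_condition_gamma_general g r d e f s t c c' α₀ β₀ hfe href hfs hgdr hrho1 hrho2 hs
    ht hc hc' hα₀ hβ₀ γ hγ1 hγ2 hγ3 hγ4
end
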